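/- arXiv:math/9403201 — 2 statements merged into one kernel-verified Lean document; each statement's English description precedes it below -/
import Mathlib

section
/- If 𝒪̄ is a maximal off-binary family in 2^{<ω} and π : ω^{<ω} → 2^{<ω} is the order-embedding sending ⟨n₀,…,n_k⟩ to 1^{n₀}⌢0⌢⋯⌢1^{n_k}⌢0, then the family of infinite pullbacks {π⁻¹(Ā) : Ā ∈ 𝒪̄, π⁻¹(Ā) infinite} is a maximal off-branch family in ω^{<ω}. -/
/-! `π` reflects as well as preserves the prefix order, so images and preimages of chains under `π`
are chains; extending them to maximal chains shows that `π` maps off-branch sets to off-binary sets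
and pulls off-binary sets back to off-branch sets. Since `π` is injective, almost disjointness and
infinitude transfer as well, so an off-branch set almost disjoint from every infinite pullback would
have an image almost disjoint from every member of `𝒪̄`. -/

/-- A branch of the tree `ω^{<ω}`: a maximal chain in the initial-segment order. -/
def IsBranch (b : Set (List ℕ)) : Prop := IsMaxChain (· <+: ·) b

/-- A set of nodes of `ω^{<ω}` is off-branch if it meets every branch finitely. -/
def OffBranch (A : Set (List ℕ)) : Prop := ∀ b, IsBranch b → (A ∩ b).Finite

/-- A maximal off-branch family in `ω^{<ω}`. -/
def MaxOffBranchFam (𝒪 : Set (Set (List ℕ))) : Prop :=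
  ((∀ A ∈ 𝒪, A.Infinite ∧ OffBranch A) ∧ 𝒪.Pairwise (fun A B => (A ∩ B).Finite)) ∧
  ∀ B : Set (List ℕ), B.Infinite → OffBranch B → ∃ A ∈ 𝒪, (B ∩ A).Infinite

/-- A branch of the binary tree `2^{<ω}`: a maximal chain in the initial-segment order. -/
def IsBinBranch (b : Set (List Bool)) : Prop := IsMaxChain (· <+: ·) b

/-- A set of nodes of `2^{<ω}` is off-binary if it meets every branch finitely. -/
def OffBinary (A : Set (List Bool)) : Prop := ∀ b, IsBinBranch b → (A ∩ b).Finite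

/-- A maximal off-binary family in `2^{<ω}`. -/
def MaxOffBinaryFam (𝒪 : Set (Set (List Bool))) : Prop :=
  ((∀ A ∈ 𝒪, A.Infinite ∧ OffBinary A) ∧ 𝒪.Pairwise (fun A B => (A ∩ B).Finite)) ∧
  ∀ B : Set (List Bool), B.Infinite → OffBinary B → ∃ A ∈ 𝒪, (B ∩ A).Infinite

/-- The canonical embedding `π : ω^{<ω} → 2^{<ω}` sending `⟨n₀,…,n_k⟩` to
`1^{n₀}⌢0⌢⋯⌢1^{n_k}⌢0`. -/
def piEmb (σ : List ℕ) : List Bool :=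
  σ.flatMap fun n => List.replicate n true ++ [false]

open Function

section MaxChains

variable {α β : Type*} {r : α → α → Prop} {s : β → β → Prop}

/-- `OffBranch` and `OffBinary` are `FiniteOnMaxChains (· <+: ·)`, and `MaxOffBranchFam`,
`MaxOffBinaryFam` are `IsMaxAlmostDisjointFamily` of those, all definitionally. -/
def FiniteOnMaxChains (r : α → α → Prop) (A : Set α) : Prop :=
  ∀ c, IsMaxChain r c → (A ∩ c).Finite

lemma FiniteOnMaxChains.preimage {A : Set β} (hA : FiniteOnMaxChains s A) (f : r ↪r s) :
    FiniteOnMaxChains r (f ⁻¹' A) := by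
  intro c hc
  obtain ⟨d, hd, hcd⟩ := (hc.isChain.image f).exists_maxChain
  refine ((hA d hd).preimage f.injective.injOn).subset ?_
  rintro a ⟨haA, hac⟩
  exact ⟨haA, hcd ⟨a, hac, rfl⟩⟩

lemma FiniteOnMaxChains.image {B : Set α} (hB : FiniteOnMaxChains r B) (f : r ↪r s) :
    FiniteOnMaxChains s (f '' B) := by
  intro d hd
  obtain ⟨c, hc, hdc⟩ := (hd.isChain.preimage_relEmbedding f).exists_maxChain
  refine ((hB c hc).image f).subset ?_
  rintro _ ⟨⟨a, haB, rfl⟩, had⟩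
  exact ⟨a, ⟨haB, hdc had⟩, rfl⟩

end MaxChains

section AlmostDisjoint

variable {α β : Type*}

def IsMaxAlmostDisjointFamily (P : Set α → Prop) (𝒪 : Set (Set α)) : Prop :=
  ((∀ A ∈ 𝒪, A.Infinite ∧ P A) ∧ 𝒪.Pairwise (fun A B => (A ∩ B).Finite)) ∧
  ∀ B : Set α, B.Infinite → P B → ∃ A ∈ 𝒪, (B ∩ A).Infinite

theorem IsMaxAlmostDisjointFamily.pullback {P : Set α → Prop} {Q : Set β → Prop}
    {𝒪 : Set (Set β)} (h𝒪 : IsMaxAlmostDisjointFamily Q 𝒪) {f : α → β} (hf : Injective f)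
    (hQP : ∀ A, Q A → P (f ⁻¹' A)) (hPQ : ∀ B, P B → Q (f '' B)) :
    IsMaxAlmostDisjointFamily P {A | ∃ A' ∈ 𝒪, A = f ⁻¹' A' ∧ (f ⁻¹' A').Infinite} := by
  obtain ⟨⟨hmem, hpair⟩, hmax⟩ := h𝒪
  refine ⟨⟨?_, ?_⟩, ?_⟩
  · rintro _ ⟨A, hA, rfl, hinf⟩
    exact ⟨hinf, hQP A (hmem A hA).2⟩
  · rintro _ ⟨A, hA, rfl, -⟩ _ ⟨A', hA', rfl, -⟩ hne
    have hAA' : A ≠ A' := fun he => hne (by rw [he])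
    exact ((hpair hA hA' hAA').preimage hf.injOn : (f ⁻¹' (A ∩ A')).Finite)
  · intro B hBinf hB
    obtain ⟨A, hA, hBA⟩ := hmax (f '' B) (hBinf.image hf.injOn) (hPQ B hB)
    have hinter : (B ∩ f ⁻¹' A).Infinite :=
      Set.Infinite.of_image f (Set.image_inter_preimage f B A ▸ hBA)
    exact ⟨f ⁻¹' A, ⟨A, hA, rfl, hinter.mono Set.inter_subset_right⟩, hinter⟩

end AlmostDisjoint

lemma piEmb_cons (n : ℕ) (σ : List ℕ) :
    piEmb (n :: σ) = List.replicate n true ++ false :: piEmb σ := by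
  simp [piEmb]

lemma replicate_true_append_false_prefix_iff {n m : ℕ} {xs ys : List Bool} :
    List.replicate n true ++ false :: xs <+: List.replicate m true ++ false :: ys ↔
      n = m ∧ xs <+: ys := by
  induction n generalizing m with
  | zero => cases m <;> simp [List.replicate_succ]
  | succ n ih => cases m <;> simp [List.replicate_succ, ih]

lemma piEmb_prefix_piEmb_iff {σ τ : List ℕ} : piEmb σ <+: piEmb τ ↔ σ <+: τ := by
  induction σ generalizing τ with
  | nil => simp [piEmb]
  | cons n σ ih =>
    cases τ with
    | nil => simp [piEmb]
    | cons m τ => simp [piEmb_cons, replicate_true_append_false_prefix_iff, ih]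

def piEmbRelEmbedding :
    ((· <+: ·) : List ℕ → List ℕ → Prop) ↪r ((· <+: ·) : List Bool → List Bool → Prop) :=
  RelEmbedding.ofMapRelIff piEmb fun _ _ => piEmb_prefix_piEmb_iff

/-- If `𝒪̄` is a maximal off-binary family, then the family of infinite pullbacks
`π⁻¹(Ā)` for `Ā ∈ 𝒪̄` is a maximal off-branch family in `ω^{<ω}`. -/
theorem pullback_max_offBinary_to_offBranch (𝒪b : Set (Set (List Bool)))
    (h : MaxOffBinaryFam 𝒪b) :
    MaxOffBranchFam {A | ∃ Ab ∈ 𝒪b, A = piEmb ⁻¹' Ab ∧ (piEmb ⁻¹' Ab).Infinite} :=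
  IsMaxAlmostDisjointFamily.pullback (P := OffBranch) (Q := OffBinary) h
    piEmbRelEmbedding.injective (fun _ hA => FiniteOnMaxChains.preimage hA piEmbRelEmbedding)
    (fun _ hB => FiniteOnMaxChains.image hB piEmbRelEmbedding)
end

section
/- 𝔞 ≤ 𝔬: the almost-disjointness number 𝔞 is at most the minimum cardinality 𝔬 of a maximal off-branch family in the tree ω^{<ω}. -/
/-- An infinite maximal almost disjoint family of infinite subsets of `ω`. -/
def MadFam (𝒜 : Set (Set ℕ)) : Prop :=
  𝒜.Infinite ∧ (∀ A ∈ 𝒜, A.Infinite) ∧ 𝒜.Pairwise (fun A B => (A ∩ B).Finite) ∧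
  ∀ B : Set ℕ, B.Infinite → ∃ A ∈ 𝒜, (B ∩ A).Infinite

/-- The almost-disjointness number `𝔞`. -/
noncomputable def frakA : Cardinal :=
  sInf {c | ∃ 𝒜 : Set (Set ℕ), MadFam 𝒜 ∧ Cardinal.mk ↥𝒜 = c}

/-- `𝔬`: the least cardinality of a maximal off-branch family. -/
noncomputable def frakO : Cardinal :=
  sInf {c | ∃ 𝒪 : Set (Set (List ℕ)), MaxOffBranchFam 𝒪 ∧ Cardinal.mk ↥𝒪 = c}

/-!
Restricting a maximal off-branch family `𝒪` to a countably infinite antichain `X` of `ω^{<ω}`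
(all of whose subsets are off-branch) yields a maximal almost disjoint family on `X ≅ ω` of size at
most `|𝒪|`, provided infinitely many members of `𝒪` meet `X` infinitely. Such an `X` is built
recursively: at stage `n`, extend every node `⟨n, m⟩` to a node outside the members
`A₀, …, Aₙ₋₁` of `𝒪` chosen so far (their union is off-branch, so it misses all but finitely many
nodes of any chain), and pick `Aₙ ∈ 𝒪` meeting these extensions infinitely. The `Aₙ` are then
pairwise distinct and all meet the antichain of all chosen nodes infinitely.
-/

open Set Function Cardinal

section AlmostDisjoint

variable {α : Type}

theorem infinite_preimage_iff_inter_range {c : ℕ → α} (hc : Injective c) (A : Set α) :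
    (c ⁻¹' A).Infinite ↔ (A ∩ range c).Infinite := by
  rw [← image_preimage_eq_inter_range, infinite_image_iff hc.injOn]

theorem exists_madFam_mk_le_of_trace {O : Set (Set α)}
    (hO : O.Pairwise fun A B => (A ∩ B).Finite) {c : ℕ → α} (hc : Injective c)
    (hmax : ∀ B ⊆ range c, B.Infinite → ∃ A ∈ O, (B ∩ A).Infinite)
    (hinf : {A ∈ O | (A ∩ range c).Infinite}.Infinite) :
    ∃ 𝒜 : Set (Set ℕ), MadFam 𝒜 ∧ #𝒜 ≤ #O := by
  set F := {A ∈ O | (A ∩ range c).Infinite}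
  have hinjOn : InjOn (c ⁻¹' ·) F := by
    intro A hA A' hA' hAA'
    by_contra hne
    have htrace : A ∩ range c = A' ∩ range c := by
      simp only [← image_preimage_eq_inter_range, hAA']
    refine hA.2 ((hO hA.1 hA'.1 hne).subset fun x hx => ⟨hx.1, ?_⟩)
    exact (htrace ▸ hx : x ∈ A' ∩ range c).1
  refine ⟨(c ⁻¹' ·) '' F, ⟨hinf.image hinjOn, ?_, ?_, ?_⟩,
    mk_image_le.trans (mk_le_mk_of_subset fun A hA => hA.1)⟩
  · rintro _ ⟨A, hA, rfl⟩
    exact (infinite_preimage_iff_inter_range hc A).2 hA.2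
  · rintro _ ⟨A, hA, rfl⟩ _ ⟨A', hA', rfl⟩ hne
    rw [← preimage_inter]
    exact (hO hA.1 hA'.1 fun h => hne (h ▸ rfl)).preimage hc.injOn
  · intro B hB
    obtain ⟨A, hAO, hBA⟩ := hmax (c '' B) (image_subset_range c B) (hB.image hc.injOn)
    refine ⟨c ⁻¹' A, ⟨A, ⟨hAO, hBA.mono fun x hx => ⟨hx.2, image_subset_range c B hx.1⟩⟩, rfl⟩,
      ?_⟩
    rwa [← infinite_image_iff hc.injOn, image_inter_preimage]

end AlmostDisjoint

section Prefix

variable {α ι : Type*}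

theorem isAntichain_range_of_prefix_imp_eq {f : ι → List α} (hf : ∀ i j, f i <+: f j → i = j) :
    IsAntichain (· <+: ·) (range f) := by
  rintro _ ⟨i, rfl⟩ _ ⟨j, rfl⟩ hne h
  exact hne (congrArg f (hf i j h))

theorem injective_of_prefix_imp_eq {f : ι → List α} (hf : ∀ i j, f i <+: f j → i = j) :
    Injective f :=
  fun i j h => hf i j (h ▸ List.prefix_refl _)

end Prefix

section OffBranch

theorem offBranch_empty : OffBranch ∅ := fun b _ => by simp

theorem OffBranch.union {A B : Set (List ℕ)} (hA : OffBranch A) (hB : OffBranch B) :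
    OffBranch (A ∪ B) := fun b hb => by
  rw [union_inter_distrib_right]
  exact (hA b hb).union (hB b hb)

theorem OffBranch.finite_inter_of_isChain {A C : Set (List ℕ)} (hA : OffBranch A)
    (hC : IsChain (· <+: ·) C) : (A ∩ C).Finite := by
  obtain ⟨M, hM, hCM⟩ := hC.exists_maxChain
  exact (hA M hM).subset (inter_subset_inter_right A hCM)

theorem offBranch_of_isAntichain {X : Set (List ℕ)} (hX : IsAntichain (· <+: ·) X) :
    OffBranch X := by
  intro b hb
  refine Subsingleton.finite ?_
  rintro x ⟨hxX, hxb⟩ y ⟨hyX, hyb⟩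
  by_contra hne
  rcases hb.1 hxb hyb hne with h | h
  exacts [hX hxX hyX hne h, hX hyX hxX (Ne.symm hne) h]

/-- Padding `l` with zeros gives an infinite chain, which an off-branch set meets finitely. -/
theorem OffBranch.exists_prefix_notMem {U : Set (List ℕ)} (hU : OffBranch U) (l : List ℕ) :
    ∃ l', l <+: l' ∧ l' ∉ U := by
  set C := range fun k => l ++ List.replicate k 0
  have hpad : ∀ {j k : ℕ}, j ≤ k → l ++ List.replicate j 0 <+: l ++ List.replicate k 0 :=
    fun h => ⟨List.replicate (_ - _) 0, by
      rw [List.append_assoc, ← List.replicate_add, Nat.add_sub_cancel' h]⟩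
  have hC : IsChain (· <+: ·) C := by
    rintro _ ⟨j, rfl⟩ _ ⟨k, rfl⟩ -
    exact (le_total j k).imp hpad hpad
  have hCinf : C.Infinite :=
    infinite_range_of_injective fun j k h => by simpa using congrArg List.length h
  obtain ⟨_, ⟨k, rfl⟩, hkU⟩ := (hCinf.sdiff (hU.finite_inter_of_isChain hC)).nonempty
  exact ⟨_, List.prefix_append l _, fun h => hkU ⟨h, k, rfl⟩⟩

/-- An extension of `l` outside `U` (a junk value unless `U` is off-branch). -/
noncomputable def extendAvoiding (U : Set (List ℕ)) (l : List ℕ) : List ℕ :=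
  Classical.epsilon fun l' => l <+: l' ∧ l' ∉ U

theorem OffBranch.prefix_extendAvoiding {U : Set (List ℕ)} (hU : OffBranch U) (l : List ℕ) :
    l <+: extendAvoiding U l :=
  (Classical.epsilon_spec (hU.exists_prefix_notMem l)).1

theorem OffBranch.extendAvoiding_notMem {U : Set (List ℕ)} (hU : OffBranch U) (l : List ℕ) :
    extendAvoiding U l ∉ U :=
  (Classical.epsilon_spec (hU.exists_prefix_notMem l)).2

theorem eq_of_extendAvoiding_prefix {U V : Set (List ℕ)} (hU : OffBranch U) (hV : OffBranch V)
    {l l' : List ℕ} (h : extendAvoiding U l <+: extendAvoiding V l')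
    (hlen : l.length = l'.length) : l = l' :=
  (List.prefix_of_prefix_length_le ((hU.prefix_extendAvoiding l).trans h)
    (hV.prefix_extendAvoiding l') hlen.le).eq_of_length hlen

theorem OffBranch.eq_of_extendAvoiding_pair_prefix {U : Set (List ℕ)} (hU : OffBranch U)
    (n m m' : ℕ) (h : extendAvoiding U [n, m] <+: extendAvoiding U [n, m']) : m = m' := by
  simpa using eq_of_extendAvoiding_prefix hU hU h rfl

end OffBranch

section MaxOffBranchFam

variable {O : Set (Set (List ℕ))}

theorem MaxOffBranchFam.exists_infinite_inter_extendAvoiding (hO : MaxOffBranchFam O)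
    {U : Set (List ℕ)} (hU : OffBranch U) (n : ℕ) :
    ∃ A ∈ O, (A ∩ range fun m => extendAvoiding U [n, m]).Infinite := by
  have hprefix := hU.eq_of_extendAvoiding_pair_prefix n
  obtain ⟨A, hAO, hA⟩ := hO.2 _ (infinite_range_of_injective (injective_of_prefix_imp_eq hprefix))
    (offBranch_of_isAntichain (isAntichain_range_of_prefix_imp_eq hprefix))
  exact ⟨A, hAO, inter_comm A _ ▸ hA⟩

theorem MaxOffBranchFam.exists_antichain_infinite_hitting (hO : MaxOffBranchFam O) :
    ∃ q : ℕ × ℕ → List ℕ, Injective q ∧ IsAntichain (· <+: ·) (range q) ∧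
      {A ∈ O | (A ∩ range q).Infinite}.Infinite := by
  have step : ∀ (n : ℕ) (U : Set (List ℕ)), ∃ A, OffBranch U →
      A ∈ O ∧ (A ∩ range fun m => extendAvoiding U [n, m]).Infinite := by
    intro n U
    by_cases hU : OffBranch U
    · obtain ⟨A, hA⟩ := hO.exists_infinite_inter_extendAvoiding hU n
      exact ⟨A, fun _ => hA⟩
    · exact ⟨∅, fun h => absurd h hU⟩
  choose A hA using step
  let U : ℕ → Set (List ℕ) := fun n => Nat.rec ∅ (fun k Uk => Uk ∪ A k Uk) n
  have hU : ∀ n, OffBranch (U n) := by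
    intro n
    induction n with
    | zero => exact offBranch_empty
    | succ n ih => exact ih.union (hO.1.1 _ (hA n _ ih).1).2
  have hAU : ∀ {m n}, m < n → A m (U m) ⊆ U n := by
    intro m n hmn
    induction n, hmn using Nat.le_induction with
    | base => exact subset_union_right
    | succ n _ ih => exact ih.trans subset_union_left
  let q : ℕ × ℕ → List ℕ := fun i => extendAvoiding (U i.1) [i.1, i.2]
  have hq : ∀ i j, q i <+: q j → i = j := fun i j h => by
    simpa [Prod.ext_iff] using eq_of_extendAvoiding_prefix (hU i.1) (hU j.1) h rfl
  have hAinj : Injective fun n => A n (U n) := .of_lt_imp_ne fun m n hmn heq => by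
    obtain ⟨_, hxA, m', rfl⟩ := (hA n _ (hU n)).2.nonempty
    exact (hU n).extendAvoiding_notMem _ (hAU hmn (heq ▸ hxA))
  refine ⟨q, injective_of_prefix_imp_eq hq, isAntichain_range_of_prefix_imp_eq hq,
    infinite_of_injective_forall_mem hAinj fun n => ⟨(hA n _ (hU n)).1, ?_⟩⟩
  refine (hA n _ (hU n)).2.mono (inter_subset_inter_right _ ?_)
  rintro _ ⟨m, rfl⟩
  exact ⟨(n, m), rfl⟩

theorem MaxOffBranchFam.exists_madFam_mk_le (hO : MaxOffBranchFam O) :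
    ∃ 𝒜 : Set (Set ℕ), MadFam 𝒜 ∧ #𝒜 ≤ #O := by
  obtain ⟨q, hqinj, hanti, hinf⟩ := hO.exists_antichain_infinite_hitting
  have hrange : range (q ∘ Nat.pairEquiv.symm) = range q :=
    Nat.pairEquiv.symm.surjective.range_comp q
  refine exists_madFam_mk_le_of_trace hO.1.2 (hqinj.comp Nat.pairEquiv.symm.injective)
    (fun B hB hBinf => hO.2 B hBinf ?_) (hrange ▸ hinf)
  exact offBranch_of_isAntichain (hanti.subset (hrange ▸ hB))

theorem exists_maxOffBranchFam : ∃ O, MaxOffBranchFam O := by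
  let S := {O : Set (Set (List ℕ)) | (∀ A ∈ O, A.Infinite ∧ OffBranch A) ∧
    O.Pairwise fun A B => (A ∩ B).Finite}
  obtain ⟨M, hM⟩ := zorn_subset S fun C hCS hC =>
    ⟨⋃₀ C, ⟨fun A ⟨O, hOC, hAO⟩ => (hCS hOC).1 A hAO,
      (pairwise_sUnion hC.directedOn).2 fun O hOC => (hCS hOC).2⟩,
      fun _ => subset_sUnion_of_mem⟩
  refine ⟨M, hM.prop, fun B hBinf hBoff => ?_⟩
  by_contra! hdisj
  have hBM : B ∉ M := fun h => hBinf (by simpa using hdisj B h)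
  have hins : insert B M ∈ S := by
    refine ⟨fun A hA => ?_, pairwise_insert.2 ⟨hM.prop.2, fun A hA _ =>
      ⟨hdisj A hA, inter_comm B A ▸ hdisj A hA⟩⟩⟩
    rcases hA with rfl | hA
    exacts [⟨hBinf, hBoff⟩, hM.prop.1 A hA]
  exact hBM (hM.eq_of_subset hins (subset_insert B M) ▸ mem_insert B M)

end MaxOffBranchFam

/-- `𝔞 ≤ 𝔬`. -/
theorem frakA_le_frakO : frakA ≤ frakO := by
  have hne : {c | ∃ 𝒪 : Set (Set (List ℕ)), MaxOffBranchFam 𝒪 ∧ #𝒪 = c}.Nonempty :=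
    let ⟨O, hO⟩ := exists_maxOffBranchFam
    ⟨_, O, hO, rfl⟩
  obtain ⟨O, hO, hOc⟩ := csInf_mem hne
  obtain ⟨𝒜, h𝒜, hle⟩ := hO.exists_madFam_mk_le
  calc frakA ≤ #𝒜 := csInf_le' ⟨𝒜, h𝒜, rfl⟩
    _ ≤ #O := hle
    _ = frakO := hOc
end
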